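/- For finite random variables X and Y with joint distribution p, and any conditional distribution q(·|·) on the values of Y given values of X with q(y|x) > 0 whenever p(x,y) > 0, the mutual information satisfies I(X;Y) ≥ E_{p(x,y)}[log q(y|x)] + H(Y), where H(Y) is the Shannon entropy of Y. -/
import Mathlib


open Finset

/-- Variational lower bound on mutual information:
`I(X;Y) ≥ E_{p(x,y)}[log q(y|x)] + H(Y)` for finite joint distribution `p`
and conditional distribution `q` positive on the support of `p`. -/
theorem variational_lower_bound_mutual_information
    {α β : Type*} [Fintype α] [Fintype β]
    (p : α × β → ℝ) (hp0 : ∀ z, 0 ≤ p z) (hp1 : ∑ z, p z = 1)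
    (q : α → β → ℝ) (hq0 : ∀ x y, 0 ≤ q x y) (hq1 : ∀ x, ∑ y, q x y = 1)
    (hqpos : ∀ x y, 0 < p (x, y) → 0 < q x y) :
    (∑ x, ∑ y, p (x, y) *
        Real.log (p (x, y) / ((∑ y', p (x, y')) * (∑ x', p (x', y)))))
      ≥ (∑ x, ∑ y, p (x, y) * Real.log (q x y))
        + (-∑ y, (∑ x, p (x, y)) * Real.log (∑ x, p (x, y))) := by
  set pX : α → ℝ := fun x => ∑ y', p (x, y') with hpXdef
  set pY : β → ℝ := fun y => ∑ x', p (x', y) with hpYdef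
  have hpXnn : ∀ x, 0 ≤ pX x := fun x => Finset.sum_nonneg fun _ _ => hp0 _
  have hpYnn : ∀ y, 0 ≤ pY y := fun y => Finset.sum_nonneg fun _ _ => hp0 _
  have hpleX : ∀ x y, p (x, y) ≤ pX x := fun x y =>
    Finset.single_le_sum (fun y' _ => hp0 (x, y')) (Finset.mem_univ y)
  have hpleY : ∀ x y, p (x, y) ≤ pY y := fun x y =>
    Finset.single_le_sum (fun x' _ => hp0 (x', y)) (Finset.mem_univ x)
  have hC : (∑ y, pY y * Real.log (pY y))
      = ∑ x, ∑ y, p (x, y) * Real.log (pY y) := by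
    rw [Finset.sum_comm]
    refine Finset.sum_congr rfl fun y _ => ?_
    rw [hpYdef, Finset.sum_mul]
  rw [ge_iff_le, ← sub_nonneg, hC]
  have key : (∑ x, ∑ y, p (x, y) * Real.log (p (x, y) / (pX x * pY y)))
      - ((∑ x, ∑ y, p (x, y) * Real.log (q x y))
        + -∑ x, ∑ y, p (x, y) * Real.log (pY y))
      = ∑ x, ∑ y, p (x, y) * Real.log (p (x, y) / (pX x * q x y)) := by
    rw [sub_add_eq_sub_sub, sub_neg_eq_add, ← Finset.sum_sub_distrib,
      ← Finset.sum_add_distrib]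
    refine Finset.sum_congr rfl fun x _ => ?_
    rw [← Finset.sum_sub_distrib, ← Finset.sum_add_distrib]
    refine Finset.sum_congr rfl fun y _ => ?_
    rcases eq_or_lt_of_le (hp0 (x, y)) with h0 | hpos
    · simp [← h0]
    · have hX : 0 < pX x := lt_of_lt_of_le hpos (hpleX x y)
      have hY : 0 < pY y := lt_of_lt_of_le hpos (hpleY x y)
      have hq : 0 < q x y := hqpos x y hpos
      rw [Real.log_div hpos.ne' (mul_pos hX hY).ne',
        Real.log_div hpos.ne' (mul_pos hX hq).ne',
        Real.log_mul hX.ne' hY.ne', Real.log_mul hX.ne' hq.ne']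
      ring
  rw [key]
  have hterm : ∀ x y, p (x, y) - pX x * q x y
      ≤ p (x, y) * Real.log (p (x, y) / (pX x * q x y)) := by
    intro x y
    rcases eq_or_lt_of_le (hp0 (x, y)) with h0 | hpos
    · simp [← h0]
      exact mul_nonneg (hpXnn x) (hq0 x y)
    · have hX : 0 < pX x := lt_of_lt_of_le hpos (hpleX x y)
      have hq : 0 < q x y := hqpos x y hpos
      have hr : 0 < pX x * q x y / p (x, y) := by positivity
      have := Real.log_le_sub_one_of_pos hr
      have hlog : Real.log (p (x, y) / (pX x * q x y))
          = -Real.log (pX x * q x y / p (x, y)) := by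
        rw [← Real.log_inv, inv_div]
      rw [hlog]
      have h2 := mul_le_mul_of_nonneg_left this hpos.le
      have h3 : p (x, y) * (pX x * q x y / p (x, y) - 1)
          = pX x * q x y - p (x, y) := by
        field_simp
      linarith
  have hsum : (0 : ℝ) ≤ ∑ x, ∑ y, p (x, y) * Real.log (p (x, y) / (pX x * q x y)) := by
    have h1 : (∑ x, ∑ y, (p (x, y) - pX x * q x y))
        ≤ ∑ x, ∑ y, p (x, y) * Real.log (p (x, y) / (pX x * q x y)) :=
      Finset.sum_le_sum fun x _ => Finset.sum_le_sum fun y _ => hterm x y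
    have h2 : (∑ x, ∑ y, (p (x, y) - pX x * q x y)) = 0 := by
      have hpsum : (∑ x, ∑ y, p (x, y)) = 1 := by
        rw [← Fintype.sum_prod_type]; exact hp1
      have hqsum : (∑ x, ∑ y, pX x * q x y) = 1 := by
        calc (∑ x, ∑ y, pX x * q x y) = ∑ x, pX x * ∑ y, q x y := by
              refine Finset.sum_congr rfl fun x _ => ?_
              rw [Finset.mul_sum]
          _ = ∑ x, pX x := by simp [hq1]
          _ = 1 := by rw [hpXdef, ← Fintype.sum_prod_type]; exact hp1
      simp only [Finset.sum_sub_distrib]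
      rw [hpsum, hqsum]; ring
    linarith
  exact hsum
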